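/- Let $K(m_0,m_1)=\tfrac12\tilde K(m_0,m_1,-m_1,-m_0)$ where $\tilde K(m_0,\dots,m_3)=4\sum_{i=0}^{3}\sum_{j=1}^{3}\psi^{(-2)}\big(\tfrac{m_i-m_{i+j}+j}{4}\big)$ (indices mod 4), $\psi^{(-2)}(z)=\int_0^z\log\Gamma$. Then for $k=0,1$ and $(m_0,m_1)$ near the origin, $\frac{\partial K}{\partial m_k}(m_0,m_1)=\log X_k(m_0,m_1,-m_1,-m_0)-\log X_{3-k}(m_0,m_1,-m_1,-m_0)$, where $X_k(m_0,\dots,m_3)=\prod_{j=1}^{3}\Gamma\big(\tfrac{m_k-m_{k+j}+j}{4}\big)$. -/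

import Mathlib

open Real

/-- The antiderivative of `log ∘ Γ`: `ψ⁽⁻²⁾(z) = ∫₀ᶻ log Γ(x) dx`. -/
noncomputable def psiM2 (z : ℝ) : ℝ := ∫ t in (0:ℝ)..z, Real.log (Real.Gamma t)

/-- The antisymmetric extension `(m₀, m₁, -m₁, -m₀)` for `n = 3`, indices in `ZMod 4`. -/
def mfun (a b : ℝ) : ZMod 4 → ℝ := fun i =>
  if i = 0 then a else if i = 1 then b else if i = 2 then -b else -a

/-- `K̃(m₀,…,m₃) = 4 ∑_{i=0}^3 ∑_{j=1}^3 ψ⁽⁻²⁾((mᵢ - m_{i+j} + j)/4)`, indices mod 4. -/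
noncomputable def Ktilde4 (m : ZMod 4 → ℝ) : ℝ :=
  4 * ∑ i ∈ Finset.range 4, ∑ j ∈ Finset.range 3,
    psiM2 ((m (i : ZMod 4) - m ((i : ZMod 4) + (j + 1 : ℕ)) + ((j : ℝ) + 1)) / 4)

/-- `X_k(m₀,…,m₃) = ∏_{j=1}^3 Γ((m_k - m_{k+j} + j)/4)`, indices mod 4. -/
noncomputable def Xm (m : ZMod 4 → ℝ) (k : ZMod 4) : ℝ :=
  ∏ j ∈ Finset.range 3, Real.Gamma ((m k - m (k + (j + 1 : ℕ)) + ((j : ℝ) + 1)) / 4)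

/-!
Each summand `ψ⁽⁻²⁾(g)` of `K̃` has derivative `log Γ(g) · g'` (fundamental theorem of calculus,
`log Γ` being integrable at `0`). Moving `m` with velocity `v`, the arguments `g_{ij}` of the
summands have velocity `(v_i - v_{i+j+1}) / 4`, so `dK̃ = ∑_{i,j} log Γ(g_{ij}) (v_i - v_{i+j+1})`.
Reindexing the second half by `i ↦ i - (j + 1)` and using that on antisymmetric points
(`m_{3-i} = -m_i`) one has `g_{i-j-1, j} = g_{3-i, j}`, this becomes
`∑_i v_i (log X_i - log X_{3-i})`. The directions of `m₀` and `m₁` on the slice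
`(m₀, m₁, -m₁, -m₀)` are `v = (1, 0, 0, -1)` and `(0, 1, -1, 0)`, and each gives twice the claimed
derivative.
-/

open MeasureTheory Finset

lemma continuousAt_log_Gamma {z : ℝ} (hz : 0 < z) :
    ContinuousAt (fun t => Real.log (Real.Gamma t)) z :=
  (Real.differentiableAt_Gamma fun m => by
      linarith [(m.cast_nonneg : (0:ℝ) ≤ m)]).continuousAt.log (Real.Gamma_pos_of_pos hz).ne'

lemma intervalIntegrable_log_Gamma {z : ℝ} (hz : 0 < z) :
    IntervalIntegrable (fun t => Real.log (Real.Gamma t)) volume 0 z := by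
  have hshift : IntervalIntegrable (fun t => Real.log (Real.Gamma (t + 1))) volume 0 z :=
    ContinuousOn.intervalIntegrable fun t ht =>
      ((continuousAt_log_Gamma (by linarith [(Set.uIcc_of_le hz.le ▸ ht).1])).comp
        (f := fun t : ℝ => t + 1) (by fun_prop)).continuousWithinAt
  -- `log Γ(t) = log Γ(t + 1) - log t` on `(0, z]`, and `log` is integrable at `0`
  refine (hshift.sub intervalIntegral.intervalIntegrable_log').congr ?_
  rw [Set.uIoc_of_le hz.le]
  intro t ht
  simp only [Real.Gamma_add_one ht.1.ne',
    Real.log_mul ht.1.ne' (Real.Gamma_pos_of_pos ht.1).ne', add_sub_cancel_left]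

lemma hasDerivAt_psiM2 {z : ℝ} (hz : 0 < z) :
    HasDerivAt psiM2 (Real.log (Real.Gamma z)) z :=
  intervalIntegral.integral_hasDerivAt_right (intervalIntegrable_log_Gamma hz)
    (ContinuousOn.stronglyMeasurableAtFilter (isOpen_Ioi (a := (0:ℝ))) (fun _ ht =>
      (continuousAt_log_Gamma ht).continuousWithinAt) z hz)
    (continuousAt_log_Gamma hz)

lemma sum_range_natCast_zmod {M : Type*} [AddCommMonoid M] (n : ℕ) [NeZero n]
    (f : ZMod n → M) : ∑ i ∈ range n, f i = ∑ i : ZMod n, f i :=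
  sum_nbij' (fun i => (i : ZMod n)) ZMod.val (by simp) (by simp [ZMod.val_lt])
    (fun i hi => ZMod.val_cast_of_lt (mem_range.mp hi)) (by simp) (by simp)

/-- `g_{ij}`; the paper's shift `j ∈ {1, 2, 3}` is `j + 1` here, as in `Ktilde4` and `Xm`. -/
noncomputable def gammaArg (m : ZMod 4 → ℝ) (i : ZMod 4) (j : ℕ) : ℝ :=
  (m i - m (i + (j + 1 : ℕ)) + ((j : ℝ) + 1)) / 4

lemma log_Xm {m : ZMod 4 → ℝ} {k : ZMod 4} (hpos : ∀ j ∈ range 3, 0 < gammaArg m k j) :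
    Real.log (Xm m k) = ∑ j ∈ range 3, Real.log (Real.Gamma (gammaArg m k j)) :=
  Real.log_prod fun j hj => (Real.Gamma_pos_of_pos (hpos j hj)).ne'

lemma hasDerivAt_gammaArg {m : ℝ → ZMod 4 → ℝ} {v : ZMod 4 → ℝ} {t : ℝ}
    (hm : ∀ i, HasDerivAt (fun s => m s i) (v i) t) (i : ZMod 4) (j : ℕ) :
    HasDerivAt (fun s => gammaArg (m s) i j) ((v i - v (i + (j + 1 : ℕ))) / 4) t :=
  (((hm i).sub (hm _)).add_const _).div_const 4

lemma hasDerivAt_Ktilde4 {m : ℝ → ZMod 4 → ℝ} {v : ZMod 4 → ℝ} {t : ℝ}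
    (hm : ∀ i, HasDerivAt (fun s => m s i) (v i) t)
    (hpos : ∀ i, ∀ j ∈ range 3, 0 < gammaArg (m t) i j) :
    HasDerivAt (fun s => Ktilde4 (m s))
      (∑ i : ZMod 4, ∑ j ∈ range 3,
        Real.log (Real.Gamma (gammaArg (m t) i j)) * (v i - v (i + (j + 1 : ℕ)))) t := by
  have hK : (fun s => Ktilde4 (m s)) =
      fun s => 4 * ∑ i : ZMod 4, ∑ j ∈ range 3, psiM2 (gammaArg (m s) i j) := by
    ext s
    exact congrArg (4 * ·)
      (sum_range_natCast_zmod 4 fun i => ∑ j ∈ range 3, psiM2 (gammaArg (m s) i j))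
  rw [hK]
  refine ((HasDerivAt.fun_sum fun i _ => HasDerivAt.fun_sum fun j hj =>
    (hasDerivAt_psiM2 (hpos i j hj)).comp t (hasDerivAt_gammaArg hm i j)).const_mul 4
    ).congr_deriv ?_
  simp only [mul_sum]
  exact sum_congr rfl fun i _ => sum_congr rfl fun j _ => by ring

lemma gammaArg_sub_of_antisymm {m : ZMod 4 → ℝ} (hm : ∀ i, m (3 - i) = -m i)
    (i : ZMod 4) (j : ℕ) : gammaArg m (i - (j + 1 : ℕ)) j = gammaArg m (3 - i) j := by
  have h : m (3 - i + (j + 1 : ℕ)) = -m (i - (j + 1 : ℕ)) := by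
    rw [← hm]; congr 1; ring
  simp only [gammaArg, sub_add_cancel, h, hm i]
  ring

lemma sum_logGamma_mul_sub_of_antisymm {m : ZMod 4 → ℝ} (v : ZMod 4 → ℝ)
    (hm : ∀ i, m (3 - i) = -m i) (hpos : ∀ i, ∀ j ∈ range 3, 0 < gammaArg m i j) :
    ∑ i : ZMod 4, ∑ j ∈ range 3,
        Real.log (Real.Gamma (gammaArg m i j)) * (v i - v (i + (j + 1 : ℕ))) =
      ∑ i : ZMod 4, v i * (Real.log (Xm m i) - Real.log (Xm m (3 - i))) := by
  have hshift : ∑ i : ZMod 4, ∑ j ∈ range 3,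
      Real.log (Real.Gamma (gammaArg m i j)) * v (i + (j + 1 : ℕ)) =
        ∑ i : ZMod 4, v i * Real.log (Xm m (3 - i)) := by
    calc _ = ∑ j ∈ range 3, ∑ i : ZMod 4,
          Real.log (Real.Gamma (gammaArg m (i - (j + 1 : ℕ)) j)) * v i := by
          rw [sum_comm]
          exact sum_congr rfl fun j _ =>
            (Equiv.subRight ((j + 1 : ℕ) : ZMod 4)).sum_comp _ |>.symm.trans (by simp)
      _ = _ := by
          simp only [gammaArg_sub_of_antisymm hm, log_Xm (hpos _), sum_comm (s := range 3),
            mul_sum, mul_comm]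
  simp only [mul_sub, sum_sub_distrib, hshift, sub_left_inj, log_Xm (hpos _), mul_sum]
  exact sum_congr rfl fun i _ => sum_congr rfl fun j _ => mul_comm _ _

lemma hasDerivAt_Ktilde4_of_antisymm {m : ℝ → ZMod 4 → ℝ} {v : ZMod 4 → ℝ} {t : ℝ}
    (hm : ∀ i, HasDerivAt (fun s => m s i) (v i) t) (hanti : ∀ i, m t (3 - i) = -m t i)
    (hpos : ∀ i, ∀ j ∈ range 3, 0 < gammaArg (m t) i j) :
    HasDerivAt (fun s => Ktilde4 (m s))
      (∑ i : ZMod 4, v i * (Real.log (Xm (m t) i) - Real.log (Xm (m t) (3 - i)))) t :=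
  (hasDerivAt_Ktilde4 hm hpos).congr_deriv (sum_logGamma_mul_sub_of_antisymm v hanti hpos)

lemma mfun_eq_mul_add_mul (a b : ℝ) (i : ZMod 4) :
    mfun a b i = a * mfun 1 0 i + b * mfun 0 1 i := by
  unfold mfun; split_ifs <;> ring

lemma mfun_three_sub (a b : ℝ) (i : ZMod 4) : mfun a b (3 - i) = -mfun a b i := by
  fin_cases i <;> first | rfl | exact (neg_neg _).symm

lemma hasDerivAt_mfun_left (a b : ℝ) (i : ZMod 4) :
    HasDerivAt (fun s => mfun s b i) (mfun 1 0 i) a := by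
  simp only [mfun_eq_mul_add_mul _ b]
  simpa using ((hasDerivAt_id a).mul_const (mfun 1 0 i)).add_const (b * mfun 0 1 i)

lemma hasDerivAt_mfun_right (a b : ℝ) (i : ZMod 4) :
    HasDerivAt (fun s => mfun a s i) (mfun 0 1 i) b := by
  simp only [mfun_eq_mul_add_mul a]
  simpa using ((hasDerivAt_id b).mul_const (mfun 0 1 i)).const_add (a * mfun 1 0 i)

lemma sum_mfun_mul_sub_three_sub (a b : ℝ) (c : ZMod 4 → ℝ) :
    ∑ i : ZMod 4, mfun a b i * (c i - c (3 - i)) = 2 * (a * (c 0 - c 3) + b * (c 1 - c 2)) := by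
  change ∑ i : Fin 4, _ = _
  rw [Fin.sum_univ_four]
  change a * (c 0 - c 3) + b * (c 1 - c 2) + -b * (c 2 - c 1) + -a * (c 3 - c 0) = _
  ring

/-- For `K(m₀,m₁) = ½ K̃(m₀,m₁,-m₁,-m₀)` one has
`∂K/∂m_k = log X_k(m₀,m₁,-m₁,-m₀) - log X_{3-k}(m₀,m₁,-m₁,-m₀)` for `k = 0, 1`. -/
theorem stmt12 (a b : ℝ)
    (hpos : ∀ i : ZMod 4, ∀ j ∈ Finset.range 3,
      0 < (mfun a b i - mfun a b (i + (j + 1 : ℕ)) + ((j : ℝ) + 1)) / 4) :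
    HasDerivAt (fun t => (1/2) * Ktilde4 (mfun t b))
      (Real.log (Xm (mfun a b) 0) - Real.log (Xm (mfun a b) 3)) a ∧
    HasDerivAt (fun t => (1/2) * Ktilde4 (mfun a t))
      (Real.log (Xm (mfun a b) 1) - Real.log (Xm (mfun a b) 2)) b := by
  constructor
  · have h := (hasDerivAt_Ktilde4_of_antisymm (hasDerivAt_mfun_left a b)
      (mfun_three_sub a b) hpos).const_mul (1 / 2)
    rw [sum_mfun_mul_sub_three_sub] at h
    exact h.congr_deriv (by ring)
  · have h := (hasDerivAt_Ktilde4_of_antisymm (hasDerivAt_mfun_right a b)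
      (mfun_three_sub a b) hpos).const_mul (1 / 2)
    rw [sum_mfun_mul_sub_three_sub] at h
    exact h.congr_deriv (by ring)
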